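/- Let d, m ≥ 1. Let N : Fin m → Matrix (Fin d) (Fin d) ℂ satisfy Σ_i N_iᴴ N_i ⊑ I in the Loewner order, and let M₀, M₁ be d×d complex matrices with M₀ᴴM₀ + M₁ᴴM₁ = I. Define Φ(ρ) = Σ_i N_i ρ N_iᴴ and ℰ₁(ρ) = M₁ ρ M₁ᴴ. Suppose ρ is a positive semidefinite d×d complex matrix such that Σ_{k=0}^∞ tr(M₀ (Φ ∘ ℰ₁)^k(ρ) M₀ᴴ) = tr(ρ). Then: (1) tr((Φ ∘ ℰ₁)^k(ρ)) → 0 as k → ∞; and (2) for every k ∈ ℕ, tr(Φ(σ_k)) = tr(σ_k), where σ_k = M₁ (Φ ∘ ℰ₁)^k(ρ) M₁ᴴ. -/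

import Mathlib

/-!
Write `t k = tr ρsk` for the trace of the state after `k` iterations, `p k` for the probability
of exiting at step `k`, and `δ k = tr σ_k - tr Φ(σ_k) ≥ 0` for the trace lost inside the body.
Since `M₀ᴴM₀ + M₁ᴴM₁ = 1`, every iteration splits `t k = p k + δ k + t (k + 1)`, so
`t 0 = ∑_{j<n} (p j + δ j) + t n`. If the exit probabilities already sum to `t 0`, the
nonnegative losses `δ` must all vanish and the remainder `t n` must tend to `0`.
-/

open Matrix Filter
open scoped ComplexOrder

def loewner {d : ℕ} (A B : Matrix (Fin d) (Fin d) ℂ) : Prop := (B - A).PosSemidef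

/-- The body super-operator `Φ(σ) = Σ_i N_i σ N_iᴴ`. -/
noncomputable def bodyMap {d m : ℕ} (N : Fin m → Matrix (Fin d) (Fin d) ℂ)
    (σ : Matrix (Fin d) (Fin d) ℂ) : Matrix (Fin d) (Fin d) ℂ :=
  ∑ i, N i * σ * (N i)ᴴ

/-- One loop iteration `ρ ↦ Φ(M₁ ρ M₁ᴴ)`. -/
noncomputable def loopStep {d m : ℕ} (N : Fin m → Matrix (Fin d) (Fin d) ℂ)
    (M₁ : Matrix (Fin d) (Fin d) ℂ) (ρ : Matrix (Fin d) (Fin d) ℂ) :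
    Matrix (Fin d) (Fin d) ℂ :=
  bodyMap N (M₁ * ρ * M₁ᴴ)

open Topology

section Telescoping

variable {t p δ : ℕ → ℝ}

theorem sum_range_add_add_eq (hstep : ∀ n, t (n + 1) + p n + δ n = t n) (n : ℕ) :
    ∑ j ∈ Finset.range n, (p j + δ j) + t n = t 0 := by
  induction n with
  | zero => simp
  | succ n ih => rw [Finset.sum_range_succ]; linarith [hstep n]

theorem sum_range_add_add_le (ht : ∀ n, 0 ≤ t n) (hstep : ∀ n, t (n + 1) + p n + δ n = t n)
    (n : ℕ) : ∑ j ∈ Finset.range n, (p j + δ j) ≤ t 0 := by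
  linarith [sum_range_add_add_eq hstep n, ht n]

theorem summable_add_of_telescoping (ht : ∀ n, 0 ≤ t n) (hp : ∀ n, 0 ≤ p n)
    (hδ : ∀ n, 0 ≤ δ n) (hstep : ∀ n, t (n + 1) + p n + δ n = t n) :
    Summable fun n => p n + δ n :=
  summable_of_sum_range_le (fun n => add_nonneg (hp n) (hδ n)) (sum_range_add_add_le ht hstep)

theorem eq_zero_of_tsum_eq_of_telescoping (ht : ∀ n, 0 ≤ t n) (hp : ∀ n, 0 ≤ p n)
    (hδ : ∀ n, 0 ≤ δ n) (hstep : ∀ n, t (n + 1) + p n + δ n = t n)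
    (hsum : ∑' n, p n = t 0) (n : ℕ) : δ n = 0 := by
  have hpδ := summable_add_of_telescoping ht hp hδ hstep
  have hp_sum : Summable p := hpδ.of_nonneg_of_le hp fun n => le_add_of_nonneg_right (hδ n)
  have hδ_sum : Summable δ := hpδ.of_nonneg_of_le hδ fun n => le_add_of_nonneg_left (hp n)
  have htsum_le : ∑' n, (p n + δ n) ≤ t 0 :=
    Real.tsum_le_of_sum_range_le (fun n => add_nonneg (hp n) (hδ n))
      (sum_range_add_add_le ht hstep)
  have hδ_tsum : ∑' n, δ n ≤ 0 := by
    rw [hp_sum.tsum_add hδ_sum, hsum] at htsum_le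
    linarith
  exact le_antisymm ((hδ_sum.le_tsum n fun j _ => hδ j).trans hδ_tsum) (hδ n)

theorem tendsto_zero_of_tsum_eq_of_telescoping (ht : ∀ n, 0 ≤ t n) (hp : ∀ n, 0 ≤ p n)
    (hδ : ∀ n, 0 ≤ δ n) (hstep : ∀ n, t (n + 1) + p n + δ n = t n)
    (hsum : ∑' n, p n = t 0) : Tendsto t atTop (𝓝 0) := by
  have hδ_zero := eq_zero_of_tsum_eq_of_telescoping ht hp hδ hstep hsum
  have hstep' : ∀ n, ∑ j ∈ Finset.range n, p j + t n = t 0 := fun n => by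
    simpa only [hδ_zero, add_zero] using sum_range_add_add_eq hstep n
  have hp_sum : HasSum p (t 0) := by
    rw [← hsum]
    simpa only [hδ_zero, add_zero] using (summable_add_of_telescoping ht hp hδ hstep).hasSum
  have hlim := (tendsto_const_nhds (x := t 0)).sub hp_sum.tendsto_sum_nat
  rw [sub_self] at hlim
  exact hlim.congr fun n => by linarith [hstep' n]

end Telescoping

namespace Matrix

variable {n : Type*} [Fintype n]

open scoped MatrixOrder in
theorem PosSemidef.trace_mul_nonneg {𝕜 : Type*} [RCLike 𝕜] {A B : Matrix n n 𝕜}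
    (hA : A.PosSemidef) (hB : B.PosSemidef) : 0 ≤ (A * B).trace := by
  classical
  obtain ⟨X, rfl⟩ := CStarAlgebra.nonneg_iff_eq_star_mul_self.mp hB.nonneg
  rw [star_eq_conjTranspose, ← mul_assoc, trace_mul_cycle]
  exact (hA.mul_mul_conjTranspose_same X).trace_nonneg

theorem PosSemidef.trace_eq_re {A : Matrix n n ℂ} (hA : A.PosSemidef) : A.trace = A.trace.re :=
  Complex.eq_re_of_ofReal_le (r := 0) (by simpa using hA.trace_nonneg)

theorem PosSemidef.re_trace_nonneg {A : Matrix n n ℂ} (hA : A.PosSemidef) : 0 ≤ A.trace.re :=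
  (Complex.nonneg_iff.mp hA.trace_nonneg).1

theorem trace_mul_mul_conjTranspose_add_eq {R : Type*} [CommSemiring R] [Star R]
    [DecidableEq n] {M₀ M₁ : Matrix n n R} (hM : M₀ᴴ * M₀ + M₁ᴴ * M₁ = 1)
    (ρ : Matrix n n R) :
    (M₀ * ρ * M₀ᴴ).trace + (M₁ * ρ * M₁ᴴ).trace = ρ.trace := by
  rw [trace_mul_cycle M₀, trace_mul_cycle M₁, ← trace_add, ← add_mul, hM, one_mul]

end Matrix

section QuantumLoop

variable {d m : ℕ} (N : Fin m → Matrix (Fin d) (Fin d) ℂ)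

theorem posSemidef_bodyMap {σ : Matrix (Fin d) (Fin d) ℂ} (hσ : σ.PosSemidef) :
    (bodyMap N σ).PosSemidef :=
  posSemidef_sum _ fun i _ => hσ.mul_mul_conjTranspose_same (N i)

theorem trace_bodyMap (σ : Matrix (Fin d) (Fin d) ℂ) :
    (bodyMap N σ).trace = ((∑ i, (N i)ᴴ * N i) * σ).trace := by
  simp only [bodyMap, trace_sum, Finset.sum_mul]
  exact Finset.sum_congr rfl fun i _ => by rw [trace_mul_cycle, mul_assoc]

theorem trace_bodyMap_le (hN : loewner (∑ i, (N i)ᴴ * N i) 1) {σ : Matrix (Fin d) (Fin d) ℂ}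
    (hσ : σ.PosSemidef) :
    (bodyMap N σ).trace ≤ σ.trace := by
  have h := PosSemidef.trace_mul_nonneg hN hσ
  rwa [sub_mul, one_mul, trace_sub, ← trace_bodyMap, sub_nonneg] at h

theorem posSemidef_iterate_loopStep (M₁ : Matrix (Fin d) (Fin d) ℂ)
    {ρ : Matrix (Fin d) (Fin d) ℂ} (hρ : ρ.PosSemidef) (k : ℕ) :
    ((loopStep N M₁)^[k] ρ).PosSemidef := by
  induction k with
  | zero => exact hρ
  | succ k ih =>
    rw [Function.iterate_succ_apply']
    exact posSemidef_bodyMap N (ih.mul_mul_conjTranspose_same M₁)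

end QuantumLoop

theorem ast_implies_survival_tendsto_zero_general
    (d m : ℕ)
    (N : Fin m → Matrix (Fin d) (Fin d) ℂ)
    (hN : loewner (∑ i, (N i)ᴴ * N i) 1)
    (M₀ M₁ : Matrix (Fin d) (Fin d) ℂ)
    (hM : M₀ᴴ * M₀ + M₁ᴴ * M₁ = 1)
    (ρ : Matrix (Fin d) (Fin d) ℂ) (hρ : ρ.PosSemidef)
    (hterm : ∑' k : ℕ, ((M₀ * ((loopStep N M₁)^[k] ρ) * M₀ᴴ).trace).re = ρ.trace.re) :
    Tendsto (fun k : ℕ => ((loopStep N M₁)^[k] ρ).trace) atTop (nhds 0) ∧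
      ∀ k : ℕ, (bodyMap N (M₁ * ((loopStep N M₁)^[k] ρ) * M₁ᴴ)).trace
        = (M₁ * ((loopStep N M₁)^[k] ρ) * M₁ᴴ).trace := by
  set ρs : ℕ → Matrix (Fin d) (Fin d) ℂ := fun k => (loopStep N M₁)^[k] ρ
  have hρs : ∀ k, (ρs k).PosSemidef := posSemidef_iterate_loopStep N M₁ hρ
  have hσ k : (M₁ * ρs k * M₁ᴴ).PosSemidef := (hρs k).mul_mul_conjTranspose_same M₁
  have hρs_succ k : ρs (k + 1) = bodyMap N (M₁ * ρs k * M₁ᴴ) :=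
    Function.iterate_succ_apply' ..
  set t : ℕ → ℝ := fun k => (ρs k).trace.re
  set δ : ℕ → ℝ := fun k => (M₁ * ρs k * M₁ᴴ).trace.re - t (k + 1)
  have hδ k : 0 ≤ δ k := by
    have hle := trace_bodyMap_le N hN (hσ k)
    rw [← hρs_succ] at hle
    exact sub_nonneg.mpr (Complex.le_def.mp hle).1
  have hstep k : t (k + 1) + (M₀ * ρs k * M₀ᴴ).trace.re + δ k = t k := by
    have := congrArg Complex.re (trace_mul_mul_conjTranspose_add_eq hM (ρs k))
    simp only [Complex.add_re] at this
    linarith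
  have ht k : 0 ≤ t k := (hρs k).re_trace_nonneg
  have hp k : 0 ≤ (M₀ * ρs k * M₀ᴴ).trace.re :=
    ((hρs k).mul_mul_conjTranspose_same M₀).re_trace_nonneg
  refine ⟨?_, fun k => ?_⟩
  · have := (tendsto_zero_of_tsum_eq_of_telescoping ht hp hδ hstep hterm).ofReal
    rw [Complex.ofReal_zero] at this
    exact this.congr fun k => (hρs k).trace_eq_re.symm
  · rw [← hρs_succ, (hρs (k + 1)).trace_eq_re, (hσ k).trace_eq_re]
    congr 1
    linarith [eq_zero_of_tsum_eq_of_telescoping ht hp hδ hstep hterm k]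

/-- If a quantum while-loop with trace-nonincreasing body terminates almost surely on
input `ρ`, then the probability of surviving `k` iterations tends to `0`, and the body
acts trace-preservingly on every intermediate state `σ_k = M₁ (Φ ∘ ℰ₁)^k(ρ) M₁ᴴ`. -/
theorem ast_implies_survival_tendsto_zero
    (d m : ℕ) (hd : 1 ≤ d) (hm : 1 ≤ m)
    (N : Fin m → Matrix (Fin d) (Fin d) ℂ)
    (hN : loewner (∑ i, (N i)ᴴ * N i) 1)
    (M₀ M₁ : Matrix (Fin d) (Fin d) ℂ)
    (hM : M₀ᴴ * M₀ + M₁ᴴ * M₁ = 1)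
    (ρ : Matrix (Fin d) (Fin d) ℂ) (hρ : ρ.PosSemidef)
    (hterm : ∑' k : ℕ, ((M₀ * ((loopStep N M₁)^[k] ρ) * M₀ᴴ).trace).re = ρ.trace.re) :
    Tendsto (fun k : ℕ => ((loopStep N M₁)^[k] ρ).trace) atTop (nhds 0) ∧
      ∀ k : ℕ, (bodyMap N (M₁ * ((loopStep N M₁)^[k] ρ) * M₁ᴴ)).trace
        = (M₁ * ((loopStep N M₁)^[k] ρ) * M₁ᴴ).trace :=
  ast_implies_survival_tendsto_zero_general d m N hN M₀ M₁ hM ρ hρ hterm
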